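/- For N-periodic infinite symmetric tridiagonal M with nonzero off-diagonals satisfying the stationarity equations for a degree n+1 superpotential W (n < N), with gcd-operator U of degree k from the factorization theorem: for every polynomial A of degree ≤ N−k−1, the matrix A(M)(U(M)_+ − U(M)_−) equals V(M)_+ − V(M)_− for some polynomial V, and commutes with M. In particular there are N−k linearly independent stationary Toda flows. -/

import Mathlib

namespace Toda

/-- Infinite ℤ×ℤ matrices over ℂ. -/
abbrev Mat : Type := ℤ → ℤ → ℂ

/-- Matrix multiplication (entrywise `tsum`; for band-type matrices these sums
are finitely supported). -/
noncomputable def mul (X Y : Mat) : Mat := fun i j => ∑' k : ℤ, X i k * Y k j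

/-- Commutator. -/
noncomputable def comm (X Y : Mat) : Mat := mul X Y - mul Y X

/-- Strictly upper triangular part. -/
def upper (X : Mat) : Mat := fun i j => if i < j then X i j else 0

/-- Strictly lower triangular part. -/
def lower (X : Mat) : Mat := fun i j => if j < i then X i j else 0

/-- Diagonal part. -/
def diagPart (X : Mat) : Mat := fun i j => if i = j then X i j else 0

/-- Identity matrix. -/
def one : Mat := fun i j => if i = j then 1 else 0

/-- Matrix powers. -/
noncomputable def pow (X : Mat) : ℕ → Mat
  | 0 => one
  | m + 1 => mul X (pow X m)

/-- Evaluate a polynomial on a matrix. -/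
noncomputable def evalPoly (A : Polynomial ℂ) (X : Mat) : Mat :=
  ∑ m ∈ Finset.range (A.natDegree + 1), A.coeff m • pow X m

/-- `N`-periodicity of entries. -/
def Periodic (N : ℕ) (X : Mat) : Prop := ∀ i j, X (i + N) (j + N) = X i j

/-- `X` has (pure) degree `k`: nonzero entries only on diagonal `j = i + k`. -/
def HasDegree (k : ℤ) (X : Mat) : Prop := ∀ i j, X i j ≠ 0 → j = i + k

/-- `X` has maximal degree `k`: entries vanish above diagonal `k`. -/
def MaxDeg (k : ℤ) (X : Mat) : Prop := ∀ i j, X i j ≠ 0 → j - i ≤ k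

/-- The infinite symmetric tridiagonal Toda Lax matrix with diagonal `φ` and
off-diagonal entries `y`. -/
def todaM (φ y : ℤ → ℂ) : Mat := fun i j =>
  if j = i then φ i
  else if j = i + 1 then y i
  else if i = j + 1 then y j
  else 0

/-- Degree-`r` component of a matrix. -/
def topPart (r : ℤ) (X : Mat) : Mat := fun i j => if j = i + r then X i j else 0

/-- Inverse of the degree-`r` component (a matrix of degree `-r`). -/
noncomputable def topInv (r : ℤ) (X : Mat) : Mat :=
  fun i j => if j = i - r then (X j (j + r))⁻¹ else 0

/-- Entrywise geometric series `Σ_{k≥0} (-1)^k Q^k`, which is a finite sum in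
each entry when `Q` has maximal degree `≤ -1`. -/
noncomputable def geomSeries (Q : Mat) : Mat :=
  fun i j => ∑ m ∈ Finset.range ((i - j).toNat + 1), (-1 : ℂ) ^ m * pow Q m i j

/-- The inverse `R⁻¹ = (R^{(r)})⁻¹ Σ_{k≥0} (-1)^k (R̃ (R^{(r)})⁻¹)^k` of a matrix
of maximal degree `r` with invertible top component. -/
noncomputable def geomInv (r : ℤ) (R : Mat) : Mat :=
  mul (topInv r R) (geomSeries (mul (R - topPart r R) (topInv r R)))

/-- Integer powers of a matrix, negative powers via the geometric-series inverse. -/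
noncomputable def intPow (X : Mat) (m : ℤ) : Mat :=
  if 0 ≤ m then pow X m.toNat else pow (geomInv 1 X) (-m).toNat

/-- Shift operator `Z = D^N`. -/
def shiftZ (N : ℕ) : Mat := fun i j => if j = i + N then 1 else 0

/-- Inverse shift `Z⁻¹`. -/
def shiftZinv (N : ℕ) : Mat := fun i j => if j = i - N then 1 else 0

/-- The finite `N×N` periodic Toda Lax matrix with spectral parameter `z`,
diagonal `p`, off-diagonal entries `y 1, …, y (N-1)` and corner entries
`y 0 * z`, `y 0 * z⁻¹`. -/
noncomputable def laxFin (N : ℕ) (p y : ℕ → ℂ) (z : ℂ) :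
    Matrix (Fin N) (Fin N) ℂ := fun i j =>
  if (i : ℕ) = j then p i
  else if (j : ℕ) = i + 1 then y (i + 1)
  else if (i : ℕ) = j + 1 then y (j + 1)
  else if (i : ℕ) = 0 ∧ (j : ℕ) = N - 1 then y 0 * z
  else if (i : ℕ) = N - 1 ∧ (j : ℕ) = 0 then y 0 * z⁻¹
  else 0

/-- Embedding of polynomials in `x` into the field `ℂ((x⁻¹))` of Laurent series
at infinity, sending `x` to the inverse of the local parameter. -/
noncomputable def atInf (p : Polynomial ℂ) : LaurentSeries ℂ :=
  Polynomial.eval₂ HahnSeries.C (HahnSeries.single (-1 : ℤ) 1) p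

/-!
Write `X₊ − X₋` for `plusMinus X`. Let `R` be symmetric with `R` and `R₊ − R₋` both commuting with
the tridiagonal `M`. The entries of the two commutators at `(i, i)` and `(i, i + 1)`, where the
nonzero off-diagonal entries of `M` can be cancelled, show that `R` has a constant diagonal `c` and
that `M (R₊ − R₋) = (M R)₊ − (M R)₋ − c (M₊ − M₋)`. For `R = V(M)` the right side is
`V'(M)₊ − V'(M)₋` with `V' = x V − c x`. Starting from `U(M)₊ − U(M)₋`, which commutes with `M`,
induction on `m` gives this form for `M^m (U(M)₊ − U(M)₋)`, and linearity for
`A(M) (U(M)₊ − U(M)₋)`; the latter commutes with `M` because both factors do.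
-/

/-- On band matrices the `tsum` in `mul` is a finite sum, so `mul` is associative and
distributes over finite sums. -/
def Band (b : ℕ) (X : Mat) : Prop := ∀ i j, X i j ≠ 0 → j ≤ i + b ∧ i ≤ j + b

section Band

variable {a b : ℕ} {X Y : Mat}

lemma mul_apply_eq_sum_left (hX : Band b X) (Y : Mat) (i j : ℤ) :
    mul X Y i j = ∑ k ∈ Finset.Icc (i - b) (i + b), X i k * Y k j := by
  refine tsum_eq_sum fun k hk => ?_
  suffices X i k = 0 by rw [this, zero_mul]
  by_contra h
  have := hX i k h
  exact hk (Finset.mem_Icc.mpr (by omega))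

lemma mul_apply_eq_sum_right (hY : Band b Y) (X : Mat) (i j : ℤ) :
    mul X Y i j = ∑ k ∈ Finset.Icc (j - b) (j + b), X i k * Y k j := by
  refine tsum_eq_sum fun k hk => ?_
  suffices Y k j = 0 by rw [this, mul_zero]
  by_contra h
  have := hY k j h
  exact hk (Finset.mem_Icc.mpr (by omega))

lemma Band.mul (hX : Band a X) (hY : Band b Y) : Band (a + b) (mul X Y) := by
  intro i j h
  obtain ⟨k, hk⟩ : ∃ k, X i k * Y k j ≠ 0 := by
    by_contra! hc
    exact h (by simp [Toda.mul, hc])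
  have := hX i k (left_ne_zero_of_mul hk)
  have := hY k j (right_ne_zero_of_mul hk)
  push_cast
  omega

lemma mul_assoc_of_band (hX : Band a X) (hY : Band b Y) (Z : Mat) :
    mul (mul X Y) Z = mul X (mul Y Z) := by
  funext i j
  have hYZ : ∀ l ∈ Finset.Icc (i - a) (i + a), X i l * mul Y Z l j
      = X i l * ∑ k ∈ Finset.Icc (i - (a + b : ℕ)) (i + (a + b : ℕ)), Y l k * Z k j := by
    intro l hl
    congr 1
    refine tsum_eq_sum fun k hk => ?_
    suffices Y l k = 0 by rw [this, zero_mul]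
    by_contra h
    have := hY l k h
    exact hk (Finset.mem_Icc.mpr (by push_cast; rw [Finset.mem_Icc] at hl; omega))
  rw [mul_apply_eq_sum_left (hX.mul hY), mul_apply_eq_sum_left hX, Finset.sum_congr rfl hYZ]
  simp only [mul_apply_eq_sum_left hX Y, Finset.sum_mul, Finset.mul_sum, mul_assoc]
  exact Finset.sum_comm

lemma mul_sum_of_band_left {ι : Type*} (hX : Band b X) (s : Finset ι) (f : ι → Mat) :
    mul X (∑ m ∈ s, f m) = ∑ m ∈ s, mul X (f m) := by
  funext i j
  simp only [Finset.sum_apply, mul_apply_eq_sum_left hX, Finset.mul_sum]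
  exact Finset.sum_comm

lemma sum_mul_of_band_right {ι : Type*} (hY : Band b Y) (s : Finset ι) (f : ι → Mat) :
    mul (∑ m ∈ s, f m) Y = ∑ m ∈ s, mul (f m) Y := by
  funext i j
  simp only [Finset.sum_apply, mul_apply_eq_sum_right hY, Finset.sum_mul]
  exact Finset.sum_comm

lemma band_one : Band 0 one := by
  intro i j h
  by_cases hij : i = j
  · omega
  · simp [one, hij] at h

lemma Band.pow (hX : Band b X) (m : ℕ) : Band (m * b) (pow X m) := by
  induction m with
  | zero => simpa [Toda.pow] using band_one
  | succ m ih =>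
    rw [show (m + 1) * b = b + m * b by ring]
    exact hX.mul ih

end Band

lemma mul_one_eq (X : Mat) : mul X one = X := by
  funext i j
  exact (tsum_eq_single j fun k hk => by simp [one, hk]).trans (by simp [one])

lemma one_mul_eq (X : Mat) : mul one X = X := by
  funext i j
  exact (tsum_eq_single i fun k hk => by simp [one, Ne.symm hk]).trans (by simp [one])

lemma mul_smul_right (c : ℂ) (X Y : Mat) : mul X (c • Y) = c • mul X Y := by
  funext i j
  simp only [mul, Pi.smul_apply, smul_eq_mul, ← tsum_mul_left, mul_left_comm]

lemma mul_smul_left (c : ℂ) (X Y : Mat) : mul (c • X) Y = c • mul X Y := by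
  funext i j
  simp only [mul, Pi.smul_apply, smul_eq_mul, ← tsum_mul_left, mul_assoc]

lemma evalPoly_eq_sum_range {A : Polynomial ℂ} (X : Mat) {n : ℕ} (h : A.natDegree < n) :
    evalPoly A X = ∑ m ∈ Finset.range n, A.coeff m • pow X m := by
  refine Finset.sum_subset (Finset.range_subset_range.mpr (by omega)) fun m _ hm => ?_
  rw [Polynomial.coeff_eq_zero_of_natDegree_lt (by simpa using hm), zero_smul]

lemma evalPoly_zero (X : Mat) : evalPoly 0 X = 0 := by
  simp [evalPoly]

lemma evalPoly_add (A B : Polynomial ℂ) (X : Mat) :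
    evalPoly (A + B) X = evalPoly A X + evalPoly B X := by
  set n := max (max A.natDegree B.natDegree) (A + B).natDegree + 1
  rw [evalPoly_eq_sum_range X (n := n) (by omega), evalPoly_eq_sum_range X (n := n) (by omega),
    evalPoly_eq_sum_range X (n := n) (by omega), ← Finset.sum_add_distrib]
  simp only [Polynomial.coeff_add, add_smul]

lemma evalPoly_smul (c : ℂ) (A : Polynomial ℂ) (X : Mat) :
    evalPoly (c • A) X = c • evalPoly A X := by
  set n := max A.natDegree (c • A).natDegree + 1
  rw [evalPoly_eq_sum_range X (n := n) (by omega), evalPoly_eq_sum_range X (n := n) (by omega),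
    Finset.smul_sum]
  simp only [Polynomial.coeff_smul, smul_eq_mul, mul_smul]

lemma evalPoly_X (X : Mat) : evalPoly Polynomial.X X = X := by
  simp [evalPoly, Finset.sum_range_succ, Toda.pow, mul_one_eq]

lemma evalPoly_X_mul {b : ℕ} {X : Mat} (hX : Band b X) (A : Polynomial ℂ) :
    evalPoly (Polynomial.X * A) X = mul X (evalPoly A X) := by
  have hdeg : (Polynomial.X * A).natDegree < A.natDegree + 1 + 1 := by
    have := Polynomial.natDegree_mul_le (p := Polynomial.X) (q := A)
    rw [Polynomial.natDegree_X] at this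
    omega
  rw [evalPoly_eq_sum_range X hdeg, Finset.sum_range_succ', evalPoly, mul_sum_of_band_left hX]
  simp [Polynomial.coeff_X_mul, mul_smul_right, Toda.pow]

lemma Band.evalPoly {b : ℕ} {X : Mat} (hX : Band b X) (A : Polynomial ℂ) :
    Band (A.natDegree * b) (evalPoly A X) := by
  intro i j h
  simp only [Toda.evalPoly, Finset.sum_apply, Pi.smul_apply] at h
  obtain ⟨m, hm, hne⟩ := Finset.exists_ne_zero_of_sum_ne_zero h
  have := hX.pow m i j (right_ne_zero_of_smul hne)
  have : m * b ≤ A.natDegree * b := Nat.mul_le_mul_right b (by simpa [Nat.lt_succ_iff] using hm)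
  omega

def Commutes (X Y : Mat) : Prop := mul X Y = mul Y X

lemma Commutes.mul {a b c : ℕ} {M X Z : Mat} (hM : Band a M) (hX : Band b X) (hZ : Band c Z)
    (hMX : Commutes M X) (hMZ : Commutes M Z) : Commutes M (mul X Z) :=
  calc Toda.mul M (Toda.mul X Z) = Toda.mul (Toda.mul M X) Z := (mul_assoc_of_band hM hX Z).symm
    _ = Toda.mul X (Toda.mul M Z) := by rw [hMX, mul_assoc_of_band hX hM]
    _ = Toda.mul (Toda.mul X Z) M := by rw [hMZ, mul_assoc_of_band hX hZ]

lemma commutes_pow {b : ℕ} {X : Mat} (hX : Band b X) (m : ℕ) : Commutes X (pow X m) := by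
  induction m with
  | zero => exact (mul_one_eq X).trans (one_mul_eq X).symm
  | succ m ih => exact (show Commutes X X from rfl).mul hX hX (hX.pow m) ih

lemma commutes_evalPoly {b : ℕ} {X : Mat} (hX : Band b X) (A : Polynomial ℂ) :
    Commutes X (evalPoly A X) := by
  unfold Commutes evalPoly
  rw [mul_sum_of_band_left hX, sum_mul_of_band_right hX]
  refine Finset.sum_congr rfl fun m _ => ?_
  rw [mul_smul_right, mul_smul_left, show mul X (pow X m) = _ from commutes_pow hX m]

lemma isSymm_pow {b : ℕ} {X : Mat} (hX : Band b X) (hs : Matrix.IsSymm X) (m : ℕ) :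
    Matrix.IsSymm (pow X m) := by
  induction m with
  | zero => exact Matrix.IsSymm.ext fun i j => by simp [Toda.pow, one, eq_comm]
  | succ m ih =>
    refine Matrix.IsSymm.ext fun i j => ?_
    calc mul X (pow X m) j i = mul (pow X m) X j i := congrFun₂ (commutes_pow hX m) j i
      _ = mul X (pow X m) i j := tsum_congr fun k => by rw [ih.apply, hs.apply, mul_comm]

lemma isSymm_evalPoly {b : ℕ} {X : Mat} (hX : Band b X) (hs : Matrix.IsSymm X)
    (A : Polynomial ℂ) : Matrix.IsSymm (evalPoly A X) :=
  Matrix.IsSymm.ext fun i j => by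
    simp only [evalPoly, Finset.sum_apply, Pi.smul_apply, (isSymm_pow hX hs _).apply]

def plusMinus (X : Mat) : Mat := upper X - lower X

lemma Band.plusMinus {b : ℕ} {X : Mat} (hX : Band b X) : Band b (plusMinus X) := by
  intro i j h
  refine hX i j fun h0 => h ?_
  simp [Toda.plusMinus, upper, lower, h0]

lemma plusMinus_add (X Y : Mat) : plusMinus (X + Y) = plusMinus X + plusMinus Y := by
  funext i j
  simp only [plusMinus, upper, lower, Pi.add_apply, Pi.sub_apply]
  split_ifs <;> ring

lemma plusMinus_smul (c : ℂ) (X : Mat) : plusMinus (c • X) = c • plusMinus X := by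
  funext i j
  simp only [plusMinus, upper, lower, Pi.smul_apply, Pi.sub_apply, smul_eq_mul]
  split_ifs <;> ring

lemma plusMinus_zero : plusMinus 0 = 0 := by
  simpa using plusMinus_smul 0 0

section TodaMatrix

variable (φ y : ℤ → ℂ)

lemma band_todaM : Band 1 (todaM φ y) := by
  intro i j h
  simp only [todaM] at h
  split_ifs at h <;> first | omega | exact absurd rfl h

lemma isSymm_todaM : Matrix.IsSymm (todaM φ y) :=
  Matrix.IsSymm.ext fun i j => by
    simp only [todaM]
    split_ifs <;> first | rfl | omega | congr 1

lemma todaM_mul_apply (X : Mat) (i j : ℤ) :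
    mul (todaM φ y) X i j = y (i - 1) * X (i - 1) j + φ i * X i j + y i * X (i + 1) j := by
  rw [mul_apply_eq_sum_left (band_todaM φ y), Nat.cast_one,
    show Finset.Icc (i - 1) (i + 1) = {i - 1, i, i + 1} by ext; simp; omega,
    Finset.sum_insert (by simp; omega), Finset.sum_insert (by simp), Finset.sum_singleton]
  simp (disch := omega) only [todaM, if_pos, if_neg, if_true]
  ring

lemma mul_todaM_apply (X : Mat) (i j : ℤ) :
    mul X (todaM φ y) i j = X i (j - 1) * y (j - 1) + X i j * φ j + X i (j + 1) * y j := by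
  rw [mul_apply_eq_sum_right (band_todaM φ y), Nat.cast_one,
    show Finset.Icc (j - 1) (j + 1) = {j - 1, j, j + 1} by ext; simp; omega,
    Finset.sum_insert (by simp; omega), Finset.sum_insert (by simp), Finset.sum_singleton]
  simp (disch := omega) only [todaM, if_pos, if_neg, if_true]
  ring

end TodaMatrix

section Stationary

variable {φ y : ℤ → ℂ} {R : Mat}

lemma apply_add_one_add_one_eq (hy : ∀ i, y i ≠ 0) (hR : Commutes (todaM φ y) R)
    (hT : Commutes (todaM φ y) (plusMinus R)) (i : ℤ) : R (i + 1) (i + 1) = R i i := by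
  have hR' := congrFun₂ hR i (i + 1)
  have hT' := congrFun₂ hT i (i + 1)
  simp only [todaM_mul_apply, mul_todaM_apply, add_sub_cancel_right] at hR' hT'
  simp (disch := omega) only [plusMinus, upper, lower, Pi.sub_apply, if_pos, if_neg] at hT'
  exact mul_left_cancel₀ (hy i) (by linear_combination hR' - hT')

lemma apply_self_eq_apply_zero (hy : ∀ i, y i ≠ 0) (hR : Commutes (todaM φ y) R)
    (hT : Commutes (todaM φ y) (plusMinus R)) (i : ℤ) : R i i = R 0 0 := by
  induction i using Int.induction_on with
  | zero => rfl
  | succ i ih => rw [apply_add_one_add_one_eq hy hR hT, ih]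
  | pred i ih => rw [← ih, ← apply_add_one_add_one_eq hy hR hT, sub_add_cancel]

lemma mul_apply_sub_one_eq (hs : Matrix.IsSymm R) (hT : Commutes (todaM φ y) (plusMinus R))
    (i : ℤ) : y (i - 1) * R (i - 1) i = y i * R (i + 1) i := by
  have hT' := congrFun₂ hT i i
  simp only [todaM_mul_apply, mul_todaM_apply] at hT'
  simp (disch := omega) only [plusMinus, upper, lower, Pi.sub_apply, if_pos, if_neg] at hT'
  linear_combination (hT' - y (i - 1) * hs.apply (i - 1) i - y i * hs.apply i (i + 1)) / 2

theorem todaM_mul_plusMinus (hy : ∀ i, y i ≠ 0) (hs : Matrix.IsSymm R)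
    (hR : Commutes (todaM φ y) R) (hT : Commutes (todaM φ y) (plusMinus R)) :
    mul (todaM φ y) (plusMinus R)
      = plusMinus (mul (todaM φ y) R) - R 0 0 • plusMinus (todaM φ y) := by
  have hdiag := apply_self_eq_apply_zero hy hR hT
  funext i j
  simp only [plusMinus, upper, lower, Pi.sub_apply, Pi.smul_apply, smul_eq_mul, todaM_mul_apply]
  obtain h | rfl | rfl | rfl | h : i + 1 < j ∨ j = i + 1 ∨ j = i ∨ i = j + 1 ∨ j + 1 < i := by
    omega
  all_goals simp (disch := omega) only [todaM, if_pos, if_neg, if_true, add_sub_cancel_right]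
  · ring
  · linear_combination -y i * hdiag (i + 1)
  · linear_combination mul_apply_sub_one_eq hs hT j
  · linear_combination y j * hdiag j
  · ring

end Stationary

/-- `T = V(M)₊ − V(M)₋`, the matrix of the Toda flow `∂M/∂t_V = [M, T]`. -/
def IsFlowMatrix (M T : Mat) : Prop := ∃ V : Polynomial ℂ, plusMinus (evalPoly V M) = T

section IsFlowMatrix

variable {M T T' : Mat}

lemma isFlowMatrix_zero : IsFlowMatrix M 0 := ⟨0, by rw [evalPoly_zero, plusMinus_zero]⟩

lemma IsFlowMatrix.add (hT : IsFlowMatrix M T) (hT' : IsFlowMatrix M T') :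
    IsFlowMatrix M (T + T') := by
  obtain ⟨V, rfl⟩ := hT
  obtain ⟨V', rfl⟩ := hT'
  exact ⟨V + V', by rw [evalPoly_add, plusMinus_add]⟩

lemma IsFlowMatrix.smul (c : ℂ) (hT : IsFlowMatrix M T) : IsFlowMatrix M (c • T) := by
  obtain ⟨V, rfl⟩ := hT
  exact ⟨c • V, by rw [evalPoly_smul, plusMinus_smul]⟩

variable {φ y : ℤ → ℂ}

lemma IsFlowMatrix.todaM_mul (hy : ∀ i, y i ≠ 0) (hT : IsFlowMatrix (todaM φ y) T)
    (hMT : Commutes (todaM φ y) T) : IsFlowMatrix (todaM φ y) (mul (todaM φ y) T) := by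
  obtain ⟨V, rfl⟩ := hT
  have hM := band_todaM φ y
  refine ⟨Polynomial.X * V + (-evalPoly V (todaM φ y) 0 0) • Polynomial.X, ?_⟩
  rw [todaM_mul_plusMinus hy (isSymm_evalPoly hM (isSymm_todaM φ y) V) (commutes_evalPoly hM V)
      hMT, evalPoly_add, evalPoly_smul, evalPoly_X, evalPoly_X_mul hM, plusMinus_add,
    plusMinus_smul, neg_smul, sub_eq_add_neg]

lemma isFlowMatrix_pow_mul (hy : ∀ i, y i ≠ 0) {b : ℕ} (hTb : Band b T)
    (hT : IsFlowMatrix (todaM φ y) T) (hMT : Commutes (todaM φ y) T) (m : ℕ) :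
    IsFlowMatrix (todaM φ y) (mul (pow (todaM φ y) m) T) := by
  have hM := band_todaM φ y
  induction m with
  | zero => rwa [Toda.pow, one_mul_eq]
  | succ m ih =>
    rw [Toda.pow, mul_assoc_of_band hM (hM.pow m)]
    exact ih.todaM_mul hy ((commutes_pow hM m).mul hM (hM.pow m) hTb hMT)

lemma isFlowMatrix_evalPoly_mul (hy : ∀ i, y i ≠ 0) {b : ℕ} (hTb : Band b T)
    (hT : IsFlowMatrix (todaM φ y) T) (hMT : Commutes (todaM φ y) T) (A : Polynomial ℂ) :
    IsFlowMatrix (todaM φ y) (mul (evalPoly A (todaM φ y)) T) := by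
  rw [evalPoly, sum_mul_of_band_right hTb]
  refine Finset.sum_induction _ _ (fun _ _ => IsFlowMatrix.add) isFlowMatrix_zero fun m _ => ?_
  rw [mul_smul_left]
  exact (isFlowMatrix_pow_mul hy hTb hT hMT m).smul _

end IsFlowMatrix

theorem stationary_flows_general
    (N k : ℕ) (φ y : ℤ → ℂ)
    (hy0 : ∀ i, y i ≠ 0)
    (U : Polynomial ℂ)
    (hUcomm : comm (todaM φ y)
      (upper (evalPoly U (todaM φ y)) - lower (evalPoly U (todaM φ y))) = 0) :
    ∀ A : Polynomial ℂ, A.natDegree ≤ N - k - 1 →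
      ∃ V : Polynomial ℂ,
        mul (evalPoly A (todaM φ y))
            (upper (evalPoly U (todaM φ y)) - lower (evalPoly U (todaM φ y)))
          = upper (evalPoly V (todaM φ y)) - lower (evalPoly V (todaM φ y)) ∧
        comm (todaM φ y)
          (mul (evalPoly A (todaM φ y))
            (upper (evalPoly U (todaM φ y))
              - lower (evalPoly U (todaM φ y)))) = 0 := by
  intro A _
  have hM := band_todaM φ y
  have hYb := (hM.evalPoly U).plusMinus
  have hMY : Commutes (todaM φ y) (plusMinus (evalPoly U (todaM φ y))) := sub_eq_zero.mp hUcomm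
  obtain ⟨V, hV⟩ := isFlowMatrix_evalPoly_mul hy0 hYb ⟨U, rfl⟩ hMY A
  exact ⟨V, hV.symm, sub_eq_zero.mpr ((commutes_evalPoly hM A).mul hM (hM.evalPoly A) hYb hMY)⟩

/-- given the gcd-operator `U` of degree `k` from the
factorization theorem, for every polynomial `A` of degree `≤ N − k − 1` the
matrix `A(M)(U(M)₊ − U(M)₋)` is of the form `V(M)₊ − V(M)₋` and commutes with
`M`; thus `N − k` independent Toda flows are stationary. -/
theorem stationary_flows
    (N n k : ℕ) (hN : 2 < N) (hn : 0 < n) (hnN : n < N)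
    (hk1 : 1 ≤ k) (hkn : k ≤ n) (φ y : ℤ → ℂ)
    (hφ : ∀ i, φ (i + N) = φ i) (hy : ∀ i, y (i + N) = y i)
    (hy0 : ∀ i, y i ≠ 0) (Λ : ℂ) (hΛ0 : Λ ≠ 0)
    (hΛ : ∏ i ∈ Finset.range N, y (i : ℤ) ^ 2 = Λ ^ (2 * N))
    (P : Polynomial ℂ) (hPmonic : P.Monic) (hPdeg : P.natDegree = N)
    (hdet : ∀ z : ℂ, z ≠ 0 → ∀ x : ℂ,
      Matrix.det (x • (1 : Matrix (Fin N) (Fin N) ℂ)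
          - laxFin N (fun m => φ ((m : ℤ) + 1)) (fun m => y (m : ℤ)) z)
        = P.eval x + (-1) ^ N * (z + Λ ^ (2 * N) * z⁻¹))
    (W : Polynomial ℂ) (hW : W.natDegree = n + 1)
    (hstat : comm (todaM φ y)
      (upper (evalPoly (Polynomial.derivative W) (todaM φ y))
        - lower (evalPoly (Polynomial.derivative W) (todaM φ y))) = 0)
    (hdiag : diagPart (evalPoly (Polynomial.derivative W) (todaM φ y)) = 0)
    (U H G : Polynomial ℂ) (hU : U.natDegree = k)
    (hHdeg : H.natDegree = N - k) (hGdeg : G.natDegree = n - k)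
    (hUcomm : comm (todaM φ y)
      (upper (evalPoly U (todaM φ y)) - lower (evalPoly U (todaM φ y))) = 0)
    (hPfac : upper (evalPoly P (todaM φ y)) - lower (evalPoly P (todaM φ y))
      = mul (evalPoly H (todaM φ y))
          (upper (evalPoly U (todaM φ y)) - lower (evalPoly U (todaM φ y))))
    (hWfac : upper (evalPoly (Polynomial.derivative W) (todaM φ y))
        - lower (evalPoly (Polynomial.derivative W) (todaM φ y))
      = mul (evalPoly G (todaM φ y))
          (upper (evalPoly U (todaM φ y)) - lower (evalPoly U (todaM φ y)))) :
    ∀ A : Polynomial ℂ, A.natDegree ≤ N - k - 1 →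
      ∃ V : Polynomial ℂ,
        mul (evalPoly A (todaM φ y))
            (upper (evalPoly U (todaM φ y)) - lower (evalPoly U (todaM φ y)))
          = upper (evalPoly V (todaM φ y)) - lower (evalPoly V (todaM φ y)) ∧
        comm (todaM φ y)
          (mul (evalPoly A (todaM φ y))
            (upper (evalPoly U (todaM φ y))
              - lower (evalPoly U (todaM φ y)))) = 0 :=
  stationary_flows_general N k φ y hy0 U hUcomm

end Toda
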